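/- arXiv:2602.20635 — 3 statements merged into one kernel-verified Lean document; each statement's English description precedes it below -/
import Mathlib

section
/- A Hermitian complex matrix M is positive semidefinite if and only if all principal minors of M are nonnegative (a principal minor is the determinant of a submatrix obtained by selecting the same set of rows and columns). -/
open Matrix
open scoped ComplexOrder

/-! Principal submatrices of a positive semidefinite matrix are positive semidefinite, so their
determinants are nonnegative. Conversely, expanding `det (M + t • 1)` row by row writes it as
`∑ S, t ^ |Sᶜ| * det M[S, S]`; when all principal minors are nonnegative this is positive for
`t > 0` (the term `S = ∅` is `t ^ n`), so no eigenvalue of the Hermitian matrix `M` is negative. -/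

namespace Matrix

variable {n R : Type*} [Fintype n] [DecidableEq n]

theorem det_add_smul_one_eq_sum_principal_minors [CommRing R] (M : Matrix n n R) (t : R) :
    (M + t • 1).det = ∑ s : Finset n, t ^ sᶜ.card * (M.submatrix (↑) (↑) : Matrix s s R).det := by
  let D : (n → R) [⋀^n]→ₗ[R] R := detRowAlternating
  change D (M.row + (t • 1 : Matrix n n R).row) = _
  rw [D.map_add_univ]
  refine Finset.sum_congr rfl fun s _ => ?_
  have hrows : s.piecewise M.row (t • 1 : Matrix n n R).row =
      fun i => (if i ∈ s then 1 else t) • s.piecewise M.row (1 : Matrix n n R).row i := by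
    funext i
    by_cases hi : i ∈ s <;> simp only [Finset.piecewise, hi, ↓reduceIte, row, one_smul]
    rfl
  rw [hrows, D.map_smul_univ, ← det_piecewise_one_eq_submatrix_det]
  simp only [Finset.prod_ite, Finset.prod_const_one, one_mul, Finset.prod_const, smul_eq_mul,
    ← Finset.compl_filter, Finset.filter_mem_eq_inter, Finset.univ_inter]
  rfl

theorem det_add_smul_one_pos [CommRing R] [PartialOrder R] [IsStrictOrderedRing R]
    {M : Matrix n n R} (hM : ∀ s : Finset n, 0 ≤ (M.submatrix (↑) (↑) : Matrix s s R).det)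
    {t : R} (ht : 0 < t) : 0 < (M + t • 1).det := by
  rw [det_add_smul_one_eq_sum_principal_minors]
  refine Finset.sum_pos' (fun s _ => mul_nonneg (pow_nonneg ht.le _) (hM s))
    ⟨∅, Finset.mem_univ _, ?_⟩
  simpa using pow_pos ht _

theorem IsHermitian.det_sub_eigenvalue_smul_one {𝕜 : Type*} [RCLike 𝕜] {A : Matrix n n 𝕜}
    (hA : A.IsHermitian) (i : n) : (A - (hA.eigenvalues i : 𝕜) • 1).det = 0 := by
  have hroot := congrArg (Polynomial.eval (hA.eigenvalues i : 𝕜)) hA.charpoly_eq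
  rw [eval_charpoly, Polynomial.eval_prod,
    Finset.prod_eq_zero (Finset.mem_univ i) (by simp)] at hroot
  rw [← neg_sub, det_neg, smul_one_eq_diagonal, ← scalar_apply, hroot, mul_zero]

end Matrix

/-- A Hermitian complex matrix is positive semidefinite iff all of its
principal minors (determinants of submatrices on the same set of rows
and columns) are nonnegative. -/
theorem posSemidef_iff_principal_minors_nonneg {n : ℕ}
    (M : Matrix (Fin n) (Fin n) ℂ) (hM : M.IsHermitian) :
    M.PosSemidef ↔
      ∀ S : Finset (Fin n),
        0 ≤ (M.submatrix (fun i : S => (i : Fin n)) (fun i : S => (i : Fin n))).det := by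
  refine ⟨fun hpsd S => (hpsd.submatrix _).det_nonneg, fun hminors => ?_⟩
  refine hM.posSemidef_iff_eigenvalues_nonneg.mpr fun i => not_lt.mp fun hneg => ?_
  have hsingular := hM.det_sub_eigenvalue_smul_one i
  rw [sub_eq_add_neg, ← neg_smul] at hsingular
  refine (det_add_smul_one_pos hminors ?_).ne' hsingular
  exact neg_pos.mpr (RCLike.ofReal_lt_zero.mpr hneg)
end

section
/- For any set X of density matrices on n qudits, the set of states obtained by first applying one insertion and then one deletion is contained in the set obtained by first applying one deletion and then one insertion: D¹(I¹(X)) ⊆ I¹(D¹(X)). -/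
open Matrix
open scoped ComplexOrder

/-- Matrices on `n` qudits of level `l`. -/
abbrev QMat (l n : ℕ) := Matrix (Fin n → Fin l) (Fin n → Fin l) ℂ

/-- A quantum state on some finite number of qudits. -/
def QState (l : ℕ) := Σ n : ℕ, QMat l n

/-- Density matrix: positive semidefinite with trace 1. -/
def IsDensity {l n : ℕ} (ρ : QMat l n) : Prop := ρ.PosSemidef ∧ ρ.trace = 1

def IsDensityS {l : ℕ} (ρ : QState l) : Prop := ρ.2.PosSemidef ∧ ρ.2.trace = 1

/-- Partial trace over the qudit at position `p`. -/
noncomputable def traceOut {l n : ℕ} (p : Fin (n + 1)) (ρ : QMat l (n + 1)) : QMat l n :=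
  fun x y => ∑ z : Fin l, ρ (p.insertNth z x) (p.insertNth z y)

/-- Single deletion: all states obtained by tracing out one qudit. -/
def del1 {l : ℕ} : QState l → Set (QState l)
  | ⟨0, _⟩ => ∅
  | ⟨n + 1, ρ⟩ => { σ | ∃ p : Fin (n + 1), σ = ⟨n, traceOut p ρ⟩ }

/-- Single insertion sphere: density matrices having `ρ` among their single deletions. -/
def ins1 {l : ℕ} (ρ : QState l) : Set (QState l) :=
  { σ | IsDensityS σ ∧ ρ ∈ del1 σ }

def delSet {l : ℕ} (X : Set (QState l)) : Set (QState l) := ⋃ ρ ∈ X, del1 ρ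
def insSet {l : ℕ} (X : Set (QState l)) : Set (QState l) := ⋃ ρ ∈ X, ins1 ρ

/-- `s`-deletion errors. -/
def Dq {l : ℕ} : ℕ → Set (QState l) → Set (QState l)
  | 0, X => X
  | s + 1, X => delSet (Dq s X)

/-- `t`-insertion errors. -/
def Iq {l : ℕ} : ℕ → Set (QState l) → Set (QState l)
  | 0, X => X
  | t + 1, X => insSet (Iq t X)

/-- Quantum indel distance. -/
noncomputable def qdist {l : ℕ} (ρ₁ ρ₂ : QState l) : ℕ :=
  sInf { k | ∃ s t : ℕ, s + t = k ∧ (Dq s {ρ₁} ∩ Dq t {ρ₂}).Nonempty }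

/-!
Write `σ` for the state on `n + 1` qudits from which both a state `ρ ∈ X` and the given state `τ`
arise by tracing out one qudit. If the same qudit is traced out, `τ = ρ`, which is a single
insertion into any of its own deletions. Otherwise partial traces over two distinct qudits
commute, so removing from `τ` the qudit that `ρ` lacks yields a deletion of `ρ`; and `τ`, a
partial trace of the density matrix `σ`, is itself a density matrix.
-/

theorem Fin.insertNth_insertNth_eq_swap {α : Type*} {n : ℕ} (i : Fin (n + 2)) (j : Fin (n + 1))
    (z w : α) (x : Fin n → α) :
    Fin.insertNth (α := fun _ => α) i z (Fin.insertNth (α := fun _ => α) j w x) =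
      Fin.insertNth (α := fun _ => α) (i.succAbove j) w
        (Fin.insertNth (α := fun _ => α) (j.predAbove i) z x) := by
  funext k
  refine Fin.succAboveCases (i.succAbove j) ?_ (fun k => ?_) k
  · simp
  refine Fin.succAboveCases (j.predAbove i) ?_ (fun k => ?_) k
  · rw [Fin.insertNth_apply_succAbove, Fin.insertNth_apply_same,
      Fin.succAbove_succAbove_predAbove, Fin.insertNth_apply_same]
  · rw [Fin.insertNth_apply_succAbove, Fin.insertNth_apply_succAbove,
      Fin.succAbove_succAbove_succAbove_predAbove, Fin.insertNth_apply_succAbove,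
      Fin.insertNth_apply_succAbove]

section TraceOut

variable {l n : ℕ}

theorem traceOut_traceOut_eq_swap (i : Fin (n + 2)) (j : Fin (n + 1)) (σ : QMat l (n + 2)) :
    traceOut j (traceOut i σ) = traceOut (j.predAbove i) (traceOut (i.succAbove j) σ) := by
  funext x y
  simp only [traceOut]
  rw [Finset.sum_comm]
  simp_rw [Fin.insertNth_insertNth_eq_swap i j]

theorem exists_traceOut_traceOut_eq (i i' : Fin (n + 2)) (σ : QMat l (n + 2)) :
    ∃ j j' : Fin (n + 1), traceOut j (traceOut i σ) = traceOut j' (traceOut i' σ) := by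
  rcases eq_or_ne i' i with rfl | hne
  · exact ⟨0, 0, rfl⟩
  obtain ⟨j, rfl⟩ := Fin.exists_succAbove_eq hne
  exact ⟨j, j.predAbove i, traceOut_traceOut_eq_swap i j σ⟩

theorem trace_traceOut (p : Fin (n + 1)) (ρ : QMat l (n + 1)) :
    (traceOut p ρ).trace = ρ.trace := by
  simp only [Matrix.trace, Matrix.diag, traceOut]
  rw [← (Fin.insertNthEquiv (fun _ => Fin l) p).sum_comp, Fintype.sum_prod_type,
    Finset.sum_comm]
  rfl

theorem Matrix.PosSemidef.traceOut (p : Fin (n + 1)) {ρ : QMat l (n + 1)} (h : ρ.PosSemidef) :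
    (_root_.traceOut p ρ).PosSemidef := by
  have hsum : _root_.traceOut p ρ =
      ∑ z : Fin l, ρ.submatrix (p.insertNth z) (p.insertNth z) := by
    funext x y
    simp [_root_.traceOut, Matrix.sum_apply]
  rw [hsum]
  exact Matrix.posSemidef_sum _ fun z _ => h.submatrix _

theorem isDensityS_traceOut (p : Fin (n + 1)) {ρ : QMat l (n + 1)}
    (h : IsDensityS ⟨n + 1, ρ⟩) : IsDensityS ⟨n, traceOut p ρ⟩ :=
  ⟨h.1.traceOut p, (trace_traceOut p ρ).trans h.2⟩

end TraceOut

/-- One insertion followed by one deletion is contained in one deletion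
followed by one insertion: `D¹(I¹(X)) ⊆ I¹(D¹(X))`. -/
theorem del_ins_subset_ins_del {l n : ℕ} (hn : 1 ≤ n) (X : Set (QState l))
    (hX : ∀ ρ ∈ X, ρ.1 = n ∧ IsDensityS ρ) :
    Dq 1 (Iq 1 X) ⊆ Iq 1 (Dq 1 X) := by
  intro τ hτ
  simp only [Dq, Iq, delSet, insSet, Set.mem_iUnion] at hτ ⊢
  obtain ⟨σ, ⟨ρ, hρX, hσ, hρσ⟩, hτσ⟩ := hτ
  obtain ⟨_ | k, S⟩ := σ
  · exact hρσ.elim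
  obtain ⟨i, rfl⟩ := hρσ
  obtain ⟨i', rfl⟩ := hτσ
  have hk : k = n := (hX _ hρX).1
  obtain ⟨m, rfl⟩ : ∃ m, k = m + 1 := ⟨n - 1, by omega⟩
  obtain ⟨j', j, hjj⟩ := exists_traceOut_traceOut_eq i' i S
  exact ⟨⟨m, traceOut j' (traceOut i' S)⟩, ⟨_, hρX, j, by rw [hjj]⟩,
    isDensityS_traceOut i' hσ, j', rfl⟩
end

section
/- If a set X of density matrices on n qudits corrects t deletion errors (i.e., for distinct ρ₁, ρ₂ ∈ X, D^t(ρ₁) ∩ D^t(ρ₂) = ∅), then for every s, u ∈ ℕ with s + u = t, the error spheres (I^u∘D^s)(ρ₁) and (I^u∘D^s)(ρ₂) are disjoint for all distinct ρ₁, ρ₂ ∈ X; hence X corrects any total of t insertion and deletion errors. -/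
open Matrix
open scoped ComplexOrder

/-!
A state `σ` in both error spheres traces down, in `u` steps, to some `τ₁ ∈ D^s(ρ₁)` and some
`τ₂ ∈ D^s(ρ₂)`. Partial traces over two different qudits commute, so single deletions have the
diamond property, and graded confluence gives a common partial trace of `τ₁` and `τ₂` at most
`u` levels below them. Tracing out further, down to exactly `u` levels (possible as `t ≤ n`),
yields a common element of `D^t(ρ₁)` and `D^t(ρ₂)`.
-/

namespace Relation

variable {α : Type*} {r : α → α → Prop}

theorem exists_reflTransGen_reflGen_of_diamond
    (h : ∀ a b c, r a b → r a c → ∃ d, ReflGen r b d ∧ ReflGen r c d)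
    {a b c : α} (hab : r a b) (hac : ReflTransGen r a c) :
    ∃ d, ReflTransGen r b d ∧ ReflGen r c d := by
  induction hac with
  | refl => exact ⟨b, .refl, .single hab⟩
  | tail _ hce ih =>
    obtain ⟨d, hbd, hcd⟩ := ih
    cases hcd with
    | refl => exact ⟨_, hbd.tail hce, .refl⟩
    | single hcd =>
      obtain ⟨f, hdf, hef⟩ := h _ _ _ hcd hce
      exact ⟨f, hbd.trans hdf.to_reflTransGen, hef⟩

/-- The join `d` lies no deeper below `b` than `c` lies below `a`. -/
theorem exists_join_graded_of_diamond (f : α → ℕ) (hf : ∀ a b, r a b → f b + 1 = f a)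
    (h : ∀ a b c, r a b → r a c → ∃ d, ReflGen r b d ∧ ReflGen r c d)
    {a b c : α} (hab : ReflTransGen r a b) (hac : ReflTransGen r a c) :
    ∃ d, ReflTransGen r b d ∧ ReflTransGen r c d ∧ f b + f c ≤ f d + f a := by
  induction hab with
  | refl => exact ⟨c, hac, .refl, by omega⟩
  | @tail b e _ hbe ih =>
    obtain ⟨d, hbd, hcd, hd⟩ := ih
    obtain ⟨g, heg, hdg⟩ := exists_reflTransGen_reflGen_of_diamond h hbe hbd
    have hfe := hf _ _ hbe
    have hfg : f d ≤ f g + 1 := by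
      cases hdg with
      | refl => omega
      | single hdg => exact (hf _ _ hdg).ge
    exact ⟨g, heg, hcd.trans hdg.to_reflTransGen, by omega⟩

end Relation

theorem Fin.insertNth_insertNth_swap {α : Type*} {n : ℕ} (i : Fin (n + 2)) (j : Fin (n + 1))
    (a b : α) (x : Fin n → α) :
    i.insertNth (α := fun _ => α) a (j.insertNth b x) =
      (i.succAbove j).insertNth b ((j.predAbove i).insertNth a x) := by
  rw [eq_comm, Fin.insertNth_eq_iff, Fin.insertNth_eq_iff, ← Fin.removeNth_removeNth_eq_swap]
  simp [Fin.removeNth, Fin.succAbove_succAbove_predAbove]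

theorem traceOut_traceOut_swap {l n : ℕ} (i : Fin (n + 2)) (j : Fin (n + 1)) (ρ : QMat l (n + 2)) :
    traceOut j (traceOut i ρ) = traceOut (j.predAbove i) (traceOut (i.succAbove j) ρ) := by
  ext x y
  simp only [traceOut]
  rw [Finset.sum_comm]
  simp only [Fin.insertNth_insertNth_swap i j]

def DelStep {l : ℕ} (σ τ : QState l) : Prop := τ ∈ del1 σ

theorem DelStep.fst_add_one {l : ℕ} {σ τ : QState l} (h : DelStep σ τ) : τ.1 + 1 = σ.1 := by
  obtain ⟨_ | n, ρ⟩ := σ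
  · simp [DelStep, del1] at h
  · obtain ⟨p, rfl⟩ := h
    rfl

theorem fst_le_of_reflTransGen_delStep {l : ℕ} {σ τ : QState l}
    (h : Relation.ReflTransGen DelStep σ τ) : τ.1 ≤ σ.1 := by
  induction h with
  | refl => exact le_rfl
  | tail _ hυτ ih => have := hυτ.fst_add_one; omega

theorem exists_delStep {l : ℕ} {σ : QState l} (h : 0 < σ.1) : ∃ τ, DelStep σ τ := by
  obtain ⟨_ | n, ρ⟩ := σ
  · exact absurd h (lt_irrefl 0)
  · exact ⟨⟨n, traceOut 0 ρ⟩, 0, rfl⟩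

theorem delStep_diamond {l : ℕ} (σ τ₁ τ₂ : QState l) (h₁ : DelStep σ τ₁) (h₂ : DelStep σ τ₂) :
    ∃ ω, Relation.ReflGen DelStep τ₁ ω ∧ Relation.ReflGen DelStep τ₂ ω := by
  obtain ⟨_ | _ | n, ρ⟩ := σ
  · simp [DelStep, del1] at h₁
  · obtain ⟨p₁, rfl⟩ := h₁
    obtain ⟨p₂, rfl⟩ := h₂
    rw [Fin.fin_one_eq_zero p₁, Fin.fin_one_eq_zero p₂]
    exact ⟨_, .refl, .refl⟩
  · obtain ⟨i, rfl⟩ := h₁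
    obtain ⟨k, rfl⟩ := h₂
    rcases eq_or_ne i k with rfl | hik
    · exact ⟨_, .refl, .refl⟩
    obtain ⟨j, rfl⟩ := Fin.exists_succAbove_eq hik.symm
    exact ⟨⟨n, traceOut j (traceOut i ρ)⟩, .single ⟨j, rfl⟩,
      .single ⟨j.predAbove i, congrArg _ (traceOut_traceOut_swap i j ρ)⟩⟩

theorem exists_delStep_descendant {l : ℕ} (σ : QState l) {k : ℕ} (hk : k ≤ σ.1) :
    ∃ τ, Relation.ReflTransGen DelStep σ τ ∧ τ.1 + k = σ.1 := by
  induction k with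
  | zero => exact ⟨σ, .refl, rfl⟩
  | succ k ih =>
    obtain ⟨τ, hστ, hτ⟩ := ih (by omega)
    obtain ⟨υ, hτυ⟩ := exists_delStep (σ := τ) (by omega)
    exact ⟨υ, hστ.tail hτυ, by have := hτυ.fst_add_one; omega⟩

theorem mem_Dq_singleton_iff {l k : ℕ} {σ τ : QState l} :
    τ ∈ Dq k {σ} ↔ Relation.ReflTransGen DelStep σ τ ∧ τ.1 + k = σ.1 := by
  constructor
  · intro h
    induction k generalizing τ with
    | zero => exact (show τ = σ from h) ▸ ⟨.refl, rfl⟩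
    | succ k ih =>
      obtain ⟨υ, hυ, hτ⟩ := Set.mem_iUnion₂.mp h
      obtain ⟨hσυ, hυσ⟩ := ih hυ
      exact ⟨hσυ.tail hτ, by have := DelStep.fst_add_one hτ; omega⟩
  · rintro ⟨hστ, hk⟩
    induction hστ generalizing k with
    | refl =>
      obtain rfl : k = 0 := by omega
      rfl
    | tail hσυ hυτ ih =>
      have := hυτ.fst_add_one
      have := fst_le_of_reflTransGen_delStep hσυ
      obtain ⟨k, rfl⟩ : ∃ k', k = k' + 1 := ⟨k - 1, by omega⟩
      exact Set.mem_iUnion₂.mpr ⟨_, ih (by omega), hυτ⟩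

theorem exists_delStep_descendant_of_mem_Iq {l u : ℕ} {X : Set (QState l)} {σ : QState l}
    (h : σ ∈ Iq u X) : ∃ τ ∈ X, Relation.ReflTransGen DelStep σ τ ∧ τ.1 + u = σ.1 := by
  induction u generalizing σ with
  | zero => exact ⟨σ, h, .refl, rfl⟩
  | succ u ih =>
    obtain ⟨υ, hυ, -, hσυ⟩ := Set.mem_iUnion₂.mp h
    obtain ⟨τ, hτX, hυτ, hτ⟩ := ih hυ
    exact ⟨τ, hτX, .head hσυ hυτ, by have := DelStep.fst_add_one hσυ; omega⟩

/-- If `X` corrects `t` deletion errors, then for every `s + u = t` the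
`(I^u ∘ D^s)`-error spheres of distinct elements of `X` are disjoint:
`X` corrects any total of `t` insertion and deletion errors. -/
theorem del_correcting_corrects_insdel {l n t : ℕ} (htn : t ≤ n)
    (X : Set (QState l)) (hX : ∀ ρ ∈ X, ρ.1 = n ∧ IsDensityS ρ)
    (hcorr : ∀ ρ₁ ∈ X, ∀ ρ₂ ∈ X, ρ₁ ≠ ρ₂ → Dq t {ρ₁} ∩ Dq t {ρ₂} = ∅) :
    ∀ s u : ℕ, s + u = t → ∀ ρ₁ ∈ X, ∀ ρ₂ ∈ X, ρ₁ ≠ ρ₂ →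
      Iq u (Dq s {ρ₁}) ∩ Iq u (Dq s {ρ₂}) = ∅ := by
  intro s u hsu ρ₁ h₁ ρ₂ h₂ hne
  refine Set.eq_empty_of_forall_notMem fun σ ⟨hσ₁, hσ₂⟩ => ?_
  obtain ⟨τ₁, hτ₁, hστ₁, hστ₁_fst⟩ := exists_delStep_descendant_of_mem_Iq hσ₁
  obtain ⟨τ₂, hτ₂, hστ₂, hστ₂_fst⟩ := exists_delStep_descendant_of_mem_Iq hσ₂
  obtain ⟨hρτ₁, hρτ₁_fst⟩ := mem_Dq_singleton_iff.mp hτ₁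
  obtain ⟨hρτ₂, hρτ₂_fst⟩ := mem_Dq_singleton_iff.mp hτ₂
  obtain ⟨ω, hτ₁ω, hτ₂ω, hω⟩ := Relation.exists_join_graded_of_diamond Sigma.fst
    (fun _ _ => DelStep.fst_add_one) delStep_diamond hστ₁ hστ₂
  have hρ₁ := (hX ρ₁ h₁).1
  obtain ⟨ψ, hωψ, hψ⟩ := exists_delStep_descendant ω (k := ω.1 - (n - t)) (by omega)
  have hψ₁ : ψ ∈ Dq t {ρ₁} := mem_Dq_singleton_iff.mpr ⟨(hρτ₁.trans hτ₁ω).trans hωψ, by omega⟩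
  have hψ₂ : ψ ∈ Dq t {ρ₂} := mem_Dq_singleton_iff.mpr ⟨(hρτ₂.trans hτ₂ω).trans hωψ, by omega⟩
  exact Set.eq_empty_iff_forall_notMem.mp (hcorr ρ₁ h₁ ρ₂ h₂ hne) ψ ⟨hψ₁, hψ₂⟩
end
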